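/- Let f be a symmetric nontrivial tradeoff function and F a CND for f. Then F(2·) (the cdf x ↦ F(2x)) is a canonical noise distribution for the tradeoff function g = 1 − (1−f)∘(1−f) = f∘(1−f). -/

import Mathlib

open MeasureTheory Set

/-- The tradeoff function `T(P,Q)(α) = inf {1 - E_Q φ : φ measurable test, E_P φ ≤ α}`. -/
noncomputable def tradeoff {Ω : Type*} [MeasurableSpace Ω] (P Q : Measure Ω) (α : ℝ) : ℝ :=
  sInf {β : ℝ | ∃ φ : Ω → ℝ, Measurable φ ∧ (∀ ω, φ ω ∈ Icc (0:ℝ) 1) ∧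
    (∫ ω, φ ω ∂P) ≤ α ∧ β = 1 - ∫ ω, φ ω ∂Q}

/-- `f` is a tradeoff function: convex, continuous, decreasing, `f ≤ 1 - id`, with values in `[0,1]`. -/
structure IsTradeoffFn (f : ℝ → ℝ) : Prop where
  maps : ∀ x ∈ Icc (0:ℝ) 1, f x ∈ Icc (0:ℝ) 1
  convex : ConvexOn ℝ (Icc (0:ℝ) 1) f
  cont : ContinuousOn f (Icc (0:ℝ) 1)
  anti : AntitoneOn f (Icc (0:ℝ) 1)
  le_one_sub : ∀ x ∈ Icc (0:ℝ) 1, f x ≤ 1 - x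

/-- Generalized inverse of a tradeoff function: `f⁻¹(α) = inf {t ∈ [0,1] : f t ≤ α}`. -/
noncomputable def tfInv (f : ℝ → ℝ) (α : ℝ) : ℝ := sInf {t ∈ Icc (0:ℝ) 1 | f t ≤ α}

/-- A tradeoff function is symmetric if it equals its generalized inverse. -/
def SymmTF (f : ℝ → ℝ) : Prop := ∀ α ∈ Icc (0:ℝ) 1, f α = tfInv f α

/-- A tradeoff function is nontrivial if `f α < 1 - α` somewhere on `(0,1)`. -/
def NontrivialTF (f : ℝ → ℝ) : Prop := ∃ α ∈ Ioo (0:ℝ) 1, f α < 1 - α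

/-- The cumulative distribution function of a measure on `ℝ`. -/
noncomputable def rcdf (μ : Measure ℝ) (x : ℝ) : ℝ := (μ (Iic x)).toReal

/-- The quantile (generalized inverse) of a cdf: `F⁻¹(p) = inf {x : p ≤ F x}`. -/
noncomputable def quantileFn (F : ℝ → ℝ) (p : ℝ) : ℝ := sInf {x : ℝ | p ≤ F x}

/-- The Bernoulli distribution on `Bool` with success probability `p`. -/
noncomputable def bern (p : ℝ) : Measure Bool :=
  ENNReal.ofReal p • Measure.dirac true + ENNReal.ofReal (1 - p) • Measure.dirac false

/-- `μ` (with cdf `F = rcdf μ`) is a canonical noise distribution for `f`: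
(1) `T(F(·),F(·-m)) ≥ f` for all `m ∈ [0,1]`;
(2) `f = T(F(·),F(·-1))` on `(0,1)`;
(3) `T(F(·),F(·-1))(α) = F(F⁻¹(1-α)-1)` on `(0,1)`;
(4) `F(x) = 1 - F(-x)`; and `F` is continuous. -/
structure IsCND (f : ℝ → ℝ) (μ : Measure ℝ) : Prop where
  prob : IsProbabilityMeasure μ
  cont : Continuous (rcdf μ)
  dp : ∀ m ∈ Icc (0:ℝ) 1, ∀ α ∈ Icc (0:ℝ) 1, f α ≤ tradeoff μ (μ.map (· + m)) α
  tight : ∀ α ∈ Ioo (0:ℝ) 1, f α = tradeoff μ (μ.map (· + 1)) α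
  closedForm : ∀ α ∈ Ioo (0:ℝ) 1,
    tradeoff μ (μ.map (· + 1)) α = rcdf μ (quantileFn (rcdf μ) (1 - α) - 1)
  symm : ∀ x : ℝ, rcdf μ x = 1 - rcdf μ (-x)

/-- `F` satisfies the defining clauses of the CND construction `F_f`: linear with slopes
determined by the fixed point `c` on `[-1/2,1/2]`, and the recurrences
`F(x) = 1 - f(F(x-1))` for `x > 1/2`, `F(x) = f(1 - F(x+1))` for `x < -1/2`. -/
def IsFfCon (f : ℝ → ℝ) (c : ℝ) (F : ℝ → ℝ) : Prop :=
  (∀ x ∈ Icc (-(1/2) : ℝ) (1/2), F x = c * (1/2 - x) + (1 - c) * (x + 1/2)) ∧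
  (∀ x : ℝ, 1/2 < x → F x = 1 - f (F (x - 1))) ∧
  (∀ x : ℝ, x < -(1/2) → F x = f (1 - F (x + 1)))

/-- `F : ℝ → ℝ` is a cumulative distribution function. -/
structure IsCDF (F : ℝ → ℝ) : Prop where
  mono : Monotone F
  rightCont : ∀ x, ContinuousWithinAt F (Ici x) x
  tendsto_bot : Filter.Tendsto F Filter.atBot (nhds 0)
  tendsto_top : Filter.Tendsto F Filter.atTop (nhds 1)

section AuxCND

open Filter Topology

variable {Ω : Type*} [MeasurableSpace Ω]

lemma aux_integrable (ν : Measure Ω) [IsProbabilityMeasure ν] {φ : Ω → ℝ}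
    (hm : Measurable φ) (hr : ∀ ω, φ ω ∈ Icc (0:ℝ) 1) : Integrable φ ν := by
  refine (integrable_const (1:ℝ)).mono' hm.aestronglyMeasurable ?_
  filter_upwards with ω
  rw [Real.norm_eq_abs, abs_le]
  exact ⟨by linarith [(hr ω).1], (hr ω).2⟩

lemma aux_integral_mem (ν : Measure Ω) [IsProbabilityMeasure ν] {φ : Ω → ℝ}
    (hm : Measurable φ) (hr : ∀ ω, φ ω ∈ Icc (0:ℝ) 1) :
    (∫ ω, φ ω ∂ν) ∈ Icc (0:ℝ) 1 := by
  constructor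
  · exact integral_nonneg fun ω => (hr ω).1
  · calc ∫ ω, φ ω ∂ν ≤ ∫ _ω, (1:ℝ) ∂ν :=
        integral_mono (aux_integrable ν hm hr) (integrable_const 1) fun ω => (hr ω).2
    _ = 1 := by simp

lemma tradeoff_bddBelow (P Q : Measure Ω) [IsProbabilityMeasure Q] (α : ℝ) :
    BddBelow {β : ℝ | ∃ φ : Ω → ℝ, Measurable φ ∧ (∀ ω, φ ω ∈ Icc (0:ℝ) 1) ∧
      (∫ ω, φ ω ∂P) ≤ α ∧ β = 1 - ∫ ω, φ ω ∂Q} := by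
  refine ⟨0, ?_⟩
  rintro β ⟨φ, hm, hr, -, rfl⟩
  have := (aux_integral_mem Q hm hr).2
  linarith

lemma tradeoff_le (P Q : Measure Ω) [IsProbabilityMeasure Q] {α : ℝ} {φ : Ω → ℝ}
    (hm : Measurable φ) (hr : ∀ ω, φ ω ∈ Icc (0:ℝ) 1) (hle : (∫ ω, φ ω ∂P) ≤ α) :
    tradeoff P Q α ≤ 1 - ∫ ω, φ ω ∂Q :=
  csInf_le (tradeoff_bddBelow P Q α) ⟨φ, hm, hr, hle, rfl⟩

lemma le_tradeoff (P Q : Measure Ω) {α c : ℝ} (hα : 0 ≤ α)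
    (h : ∀ φ : Ω → ℝ, Measurable φ → (∀ ω, φ ω ∈ Icc (0:ℝ) 1) → (∫ ω, φ ω ∂P) ≤ α →
      c ≤ 1 - ∫ ω, φ ω ∂Q) : c ≤ tradeoff P Q α := by
  refine le_csInf ⟨1, fun _ => 0, measurable_const,
    fun ω => ⟨le_refl _, zero_le_one⟩, by simpa, by simp⟩ ?_
  rintro β ⟨φ, hm, hr, hle, rfl⟩
  exact h φ hm hr hle

lemma tradeoff_map (ν ρ : Measure ℝ) (e : ℝ ≃ᵐ ℝ) :
    tradeoff (ν.map e) (ρ.map e) = tradeoff ν ρ := by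
  funext α
  unfold tradeoff
  congr 1
  ext β
  constructor
  · rintro ⟨φ, hm, hr, hle, rfl⟩
    refine ⟨φ ∘ e, hm.comp e.measurable, fun ω => hr _, ?_, ?_⟩
    · rwa [e.measurableEmbedding.integral_map] at hle
    · rw [e.measurableEmbedding.integral_map]; rfl
  · rintro ⟨φ, hm, hr, hle, rfl⟩
    refine ⟨φ ∘ e.symm, hm.comp e.symm.measurable, fun ω => hr _, ?_, ?_⟩
    · rw [e.measurableEmbedding.integral_map]
      simpa [Function.comp] using hle
    · rw [e.measurableEmbedding.integral_map]
      simp [Function.comp]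

noncomputable def halfE : ℝ ≃ᵐ ℝ where
  toEquiv := { toFun := fun x => x / 2, invFun := fun x => x * 2,
               left_inv := fun x => by ring, right_inv := fun x => by ring }
  measurable_toFun := measurable_id.div_const 2
  measurable_invFun := measurable_id.mul_const 2

noncomputable def shiftE (m : ℝ) : ℝ ≃ᵐ ℝ where
  toEquiv := { toFun := fun x => x + m, invFun := fun x => x - m,
               left_inv := fun x => by ring, right_inv := fun x => by ring }
  measurable_toFun := measurable_id.add_const m
  measurable_invFun := measurable_id.sub_const m

example : ⇑halfE = fun x : ℝ => x / 2 := rfl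
example (m : ℝ) : ⇑(shiftE m) = (· + m) := rfl

lemma rcdf_mono (μ : Measure ℝ) [IsProbabilityMeasure μ] : Monotone (rcdf μ) :=
  fun _ _ h => ENNReal.toReal_mono (measure_ne_top μ _) (measure_mono (Iic_subset_Iic.2 h))

lemma rcdf_eq_cdf (μ : Measure ℝ) [IsProbabilityMeasure μ] : rcdf μ = ⇑(ProbabilityTheory.cdf μ) := by
  funext x; rw [rcdf, ProbabilityTheory.cdf_eq_real]; rfl

lemma rcdf_tendsto_atTop (μ : Measure ℝ) [IsProbabilityMeasure μ] :
    Tendsto (rcdf μ) atTop (𝓝 1) := by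
  rw [rcdf_eq_cdf]; exact ProbabilityTheory.tendsto_cdf_atTop μ

lemma rcdf_tendsto_atBot (μ : Measure ℝ) [IsProbabilityMeasure μ] :
    Tendsto (rcdf μ) atBot (𝓝 0) := by
  rw [rcdf_eq_cdf]; exact ProbabilityTheory.tendsto_cdf_atBot μ

lemma quantile_lemma (μ : Measure ℝ) [IsProbabilityMeasure μ] (hc : Continuous (rcdf μ))
    {p : ℝ} (hp : p ∈ Ioo (0:ℝ) 1) :
    rcdf μ (quantileFn (rcdf μ) p) = p ∧
      {x : ℝ | p ≤ rcdf μ x} = Ici (quantileFn (rcdf μ) p) := by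
  set F := rcdf μ with hF
  set S := {x : ℝ | p ≤ F x} with hS
  have hne : S.Nonempty := by
    have := (rcdf_tendsto_atTop μ).eventually (eventually_ge_nhds hp.2)
    obtain ⟨x, hx⟩ := this.exists
    exact ⟨x, hx⟩
  obtain ⟨x₀, hx₀⟩ : ∃ x₀, F x₀ < p := by
    have := (rcdf_tendsto_atBot μ).eventually (eventually_lt_nhds hp.1)
    exact this.exists
  have hbdd : BddBelow S := by
    refine ⟨x₀, fun y hy => ?_⟩
    by_contra hlt
    push_neg at hlt
    exact absurd (le_trans hy (rcdf_mono μ hlt.le)) (not_le.2 hx₀)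
  have hclosed : IsClosed S := isClosed_Ici.preimage hc
  set q := sInf S with hq
  have hqS : q ∈ S := hclosed.csInf_mem hne hbdd
  have hFq : F q = p := by
    refine le_antisymm ?_ hqS
    by_contra h
    push_neg at h
    have hx₀q : x₀ ≤ q := by
      by_contra hc'
      push_neg at hc'
      exact absurd (le_trans hqS (rcdf_mono μ hc'.le)) (not_le.2 hx₀)
    obtain ⟨c, hcmem, hcval⟩ :=
      intermediate_value_Icc hx₀q (hc.continuousOn) ⟨hx₀.le, h.le⟩
    have : q ≤ c := csInf_le hbdd (by simpa [hS] using hcval.ge)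
    have : c = q := le_antisymm hcmem.2 this
    rw [this] at hcval
    exact absurd hcval (ne_of_gt h)
  refine ⟨hFq, ?_⟩
  ext x
  constructor
  · intro hx; exact csInf_le hbdd hx
  · intro hx; exact le_trans hFq.ge (rcdf_mono μ hx)

end AuxCND

/-- if `F` is a CND for `f` (with underlying measure `μ`), then `F(2·)`,
the cdf of `μ` pushed forward by `x ↦ x / 2`, is a CND for `g = f ∘ (1 - f)`. -/
theorem cnd_half_scale (f : ℝ → ℝ) (hf : IsTradeoffFn f) (hsym : SymmTF f)
    (hnt : NontrivialTF f) (μ : Measure ℝ) (hcnd : IsCND f μ) :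
    IsCND (fun α => f (1 - f α)) (μ.map (fun x => x / 2)) := by
  haveI hPμ := hcnd.prob
  have hhalf : Measurable fun x : ℝ => x / 2 := measurable_id.div_const 2
  haveI : IsProbabilityMeasure (μ.map fun x : ℝ => x / 2) :=
    Measure.isProbabilityMeasure_map hhalf.aemeasurable
  have hFc : Continuous (rcdf μ) := hcnd.cont
  have hmono := rcdf_mono μ
  have hrc : ∀ x : ℝ, rcdf (μ.map fun x : ℝ => x / 2) x = rcdf μ (2 * x) := by
    intro x
    rw [rcdf, rcdf, Measure.map_apply hhalf measurableSet_Iic,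
      show (fun x : ℝ => x / 2) ⁻¹' Iic x = Iic (2 * x) from by
        ext y
        simp only [mem_preimage, mem_Iic]
        constructor <;> intro <;> linarith]
  have key : ∀ m : ℝ, tradeoff (μ.map fun x : ℝ => x / 2) ((μ.map fun x : ℝ => x / 2).map (· + m)) =
      tradeoff μ (μ.map (· + 2 * m)) := by
    intro m
    have h1 : (μ.map fun x : ℝ => x / 2) = μ.map ⇑halfE := rfl
    have h2 : ((μ.map fun x : ℝ => x / 2).map (· + m)) = (μ.map (· + 2 * m)).map ⇑halfE := by
      rw [h1, Measure.map_map (measurable_add_const m) halfE.measurable,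
        Measure.map_map halfE.measurable (measurable_add_const (2 * m))]
      congr 1
      funext x
      show x / 2 + m = (x + 2 * m) / 2
      ring
    rw [h2, h1, tradeoff_map]
  have chain : ∀ m ∈ Icc (0:ℝ) 1, ∀ α ∈ Icc (0:ℝ) 1,
      f (1 - f α) ≤ tradeoff μ (μ.map (· + 2 * m)) α := by
    intro m hm α hα
    haveI : IsProbabilityMeasure (μ.map (· + m)) :=
      Measure.isProbabilityMeasure_map (measurable_add_const m).aemeasurable
    haveI : IsProbabilityMeasure (μ.map (· + 2 * m)) :=
      Measure.isProbabilityMeasure_map (measurable_add_const (2 * m)).aemeasurable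
    apply le_tradeoff _ _ hα.1
    intro φ hmφ hr hle
    have hβ₁m : (∫ ω, φ ω ∂(μ.map (· + m))) ∈ Icc (0:ℝ) 1 := aux_integral_mem _ hmφ hr
    have h1 : f α ≤ 1 - ∫ ω, φ ω ∂(μ.map (· + m)) :=
      le_trans (hcnd.dp m hm α hα) (tradeoff_le _ _ hmφ hr hle)
    have hfα : f α ∈ Icc (0:ℝ) 1 := hf.maps α hα
    have hms : μ.map (· + 2 * m) = (μ.map (· + m)).map ⇑(shiftE m) := by
      rw [Measure.map_map (shiftE m).measurable (measurable_add_const m)]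
      congr 1
      funext x
      show x + 2 * m = (x + m) + m
      ring
    have h3 : f (∫ ω, φ ω ∂(μ.map (· + m))) ≤
        tradeoff (μ.map (· + m)) (μ.map (· + 2 * m)) (∫ ω, φ ω ∂(μ.map (· + m))) := by
      have hid : μ.map (· + m) = μ.map ⇑(shiftE m) := rfl
      calc f (∫ ω, φ ω ∂(μ.map (· + m)))
          ≤ tradeoff μ (μ.map (· + m)) (∫ ω, φ ω ∂(μ.map (· + m))) := hcnd.dp m hm _ hβ₁m
        _ = tradeoff (μ.map ⇑(shiftE m)) ((μ.map (· + m)).map ⇑(shiftE m))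
            (∫ ω, φ ω ∂(μ.map (· + m))) := by rw [tradeoff_map]
        _ = tradeoff (μ.map (· + m)) (μ.map (· + 2 * m)) (∫ ω, φ ω ∂(μ.map (· + m))) := by
            rw [← hid, ← hms]
    have h2 : tradeoff (μ.map (· + m)) (μ.map (· + 2 * m)) (∫ ω, φ ω ∂(μ.map (· + m))) ≤
        1 - ∫ ω, φ ω ∂(μ.map (· + 2 * m)) :=
      tradeoff_le _ _ hmφ hr (le_of_eq rfl)
    have h4 : f (1 - f α) ≤ f (∫ ω, φ ω ∂(μ.map (· + m))) :=
      hf.anti hβ₁m ⟨by linarith [hfα.2], by linarith [hfα.1]⟩ (by linarith)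
    linarith
  haveI : IsProbabilityMeasure (μ.map (· + 2)) :=
    Measure.isProbabilityMeasure_map (measurable_add_const (2:ℝ)).aemeasurable
  have toReal_Ioi : ∀ t : ℝ, (μ (Ioi t)).toReal = 1 - rcdf μ t := by
    intro t
    rw [← compl_Iic, measure_compl measurableSet_Iic (measure_ne_top μ _), measure_univ,
      ENNReal.toReal_sub_of_le prob_le_one ENNReal.one_ne_top, ENNReal.toReal_one]
    rfl
  have core : ∀ α ∈ Ioo (0:ℝ) 1,
      tradeoff μ (μ.map (· + 2)) α = f (1 - f α) ∧
      tradeoff μ (μ.map (· + 2)) α = rcdf μ (quantileFn (rcdf μ) (1 - α) - 2) := by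
    intro α hα
    have hα01 : α ∈ Icc (0:ℝ) 1 := ⟨hα.1.le, hα.2.le⟩
    have hp : (1 - α) ∈ Ioo (0:ℝ) 1 := ⟨by linarith [hα.2], by linarith [hα.1]⟩
    obtain ⟨hFq, hSq⟩ := quantile_lemma μ hFc hp
    have hfα : f α = rcdf μ (quantileFn (rcdf μ) (1 - α) - 1) := by
      rw [hcnd.tight α hα, hcnd.closedForm α hα]
    set q := quantileFn (rcdf μ) (1 - α) with hqdef
    set φ : ℝ → ℝ := (Ioi q).indicator 1 with hφdef
    have hmφ : Measurable φ := measurable_one.indicator measurableSet_Ioi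
    have hrφ : ∀ ω, φ ω ∈ Icc (0:ℝ) 1 := by
      intro ω
      by_cases h : ω ∈ Ioi q
      · simp [hφdef, indicator_of_mem h]
      · simp [hφdef, indicator_of_notMem h]
    have hint1 : ∫ ω, φ ω ∂μ = α := by
      rw [hφdef, integral_indicator_one measurableSet_Ioi, measureReal_def, toReal_Ioi, hFq]
      ring
    have hint2 : ∫ ω, φ ω ∂(μ.map (· + 2)) = 1 - rcdf μ (q - 2) := by
      rw [MeasureTheory.integral_map (measurable_add_const (2:ℝ)).aemeasurable
        hmφ.aestronglyMeasurable]
      have heq : (fun x : ℝ => φ (x + 2)) = (Ioi (q - 2)).indicator 1 := by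
        funext x
        rw [hφdef]
        simp only [indicator_apply, mem_Ioi, Pi.one_apply]
        by_cases h : q - 2 < x
        · rw [if_pos (by linarith : q < x + 2), if_pos h]
        · rw [if_neg (fun hh => h (by linarith)), if_neg h]
      rw [heq, integral_indicator_one measurableSet_Ioi, measureReal_def, toReal_Ioi]
    have H1 : tradeoff μ (μ.map (· + 2)) α ≤ rcdf μ (q - 2) := by
      have := tradeoff_le μ (μ.map (· + 2)) hmφ hrφ (le_of_eq hint1)
      rw [hint2] at this
      linarith
    have H2 : f (1 - f α) ≤ tradeoff μ (μ.map (· + 2)) α := by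
      have := chain 1 ⟨zero_le_one, le_refl 1⟩ α hα01
      rwa [show (2:ℝ) * 1 = 2 from by norm_num] at this
    have H3 : rcdf μ (q - 2) ≤ f (1 - f α) := by
      set β := f α with hβdef
      have hβ0 : 0 ≤ β := (hf.maps α hα01).1
      rcases eq_or_lt_of_le hβ0 with hβeq | hβpos
      · have hf1 : f 1 = 0 :=
          le_antisymm (by simpa using hf.le_one_sub 1 ⟨zero_le_one, le_refl 1⟩)
            (hf.maps 1 ⟨zero_le_one, le_refl 1⟩).1
        have hq2 : rcdf μ (q - 2) ≤ 0 := by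
          calc rcdf μ (q - 2) ≤ rcdf μ (q - 1) := hmono (by linarith)
            _ = β := hfα.symm
            _ = 0 := hβeq.symm
        rw [← hβeq, sub_zero, hf1]
        exact hq2
      · have hβlt1 : β < 1 := by
          have := hf.le_one_sub α hα01
          linarith [hα.1]
        have step : ∀ δ ∈ Ioo (0:ℝ) (1 - β), rcdf μ (q - 2) ≤ f (1 - β - δ) := by
          intro δ hδ
          have hαδ : (1 - β - δ) ∈ Ioo (0:ℝ) 1 := ⟨by linarith [hδ.2], by linarith [hδ.1]⟩
          have hfαδ : f (1 - β - δ) = rcdf μ (quantileFn (rcdf μ) (β + δ) - 1) := by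
            rw [hcnd.tight _ hαδ, hcnd.closedForm _ hαδ,
              show (1:ℝ) - (1 - β - δ) = β + δ from by ring]
          have hpδ : (β + δ) ∈ Ioo (0:ℝ) 1 := ⟨by linarith [hδ.1], by linarith [hδ.2]⟩
          obtain ⟨hFqδ, hSqδ⟩ := quantile_lemma μ hFc hpδ
          have hqq : q - 1 ≤ quantileFn (rcdf μ) (β + δ) := by
            by_contra hcon
            push_neg at hcon
            have hmle : rcdf μ (quantileFn (rcdf μ) (β + δ)) ≤ rcdf μ (q - 1) := hmono hcon.le
            rw [hFqδ, ← hfα] at hmle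
            linarith [hδ.1]
          rw [hfαδ]
          exact hmono (by linarith)
        have hmem : (1 - β) ∈ Icc (0:ℝ) 1 := ⟨by linarith, by linarith⟩
        have hco : ContinuousWithinAt f (Icc (0:ℝ) 1) (1 - β) := hf.cont _ hmem
        have htend : Filter.Tendsto (fun δ : ℝ => 1 - β - δ) (nhdsWithin 0 (Ioi 0))
            (nhdsWithin (1 - β) (Icc (0:ℝ) 1)) := by
          rw [tendsto_nhdsWithin_iff]
          constructor
          · have h0 : Filter.Tendsto (fun δ : ℝ => 1 - β - δ) (nhds 0) (nhds (1 - β - 0)) :=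
              (continuous_const.sub continuous_id).tendsto 0
            rw [sub_zero] at h0
            exact h0.mono_left nhdsWithin_le_nhds
          · filter_upwards [Ioo_mem_nhdsGT_of_mem
              (⟨le_refl (0:ℝ), by linarith⟩ : (0:ℝ) ∈ Ico (0:ℝ) (1 - β))] with δ hδ
            exact ⟨by linarith [hδ.2], by linarith [hδ.1]⟩
        have hlim : Filter.Tendsto (fun δ : ℝ => f (1 - β - δ)) (nhdsWithin 0 (Ioi 0))
            (nhds (f (1 - β))) := hco.tendsto.comp htend
        refine ge_of_tendsto hlim ?_
        filter_upwards [Ioo_mem_nhdsGT_of_mem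
          (⟨le_refl (0:ℝ), by linarith⟩ : (0:ℝ) ∈ Ico (0:ℝ) (1 - β))] with δ hδ
        exact step δ hδ
    exact ⟨le_antisymm (H1.trans H3) H2, le_antisymm H1 (H3.trans H2)⟩
  refine ⟨inferInstance, ?_, ?_, ?_, ?_, ?_⟩
  · have heq : rcdf (μ.map fun x : ℝ => x / 2) = fun x => rcdf μ (2 * x) := funext hrc
    rw [heq]
    exact hFc.comp (continuous_const.mul continuous_id)
  · intro m hm α hα
    show f (1 - f α) ≤ _
    rw [key m]
    exact chain m hm α hα
  · intro α hα
    show f (1 - f α) = _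
    rw [key 1, show (2:ℝ) * 1 = 2 from by norm_num]
    exact ((core α hα).1).symm
  · intro α hα
    rw [key 1, show (2:ℝ) * 1 = 2 from by norm_num]
    have hp : (1 - α) ∈ Ioo (0:ℝ) 1 := ⟨by linarith [hα.2], by linarith [hα.1]⟩
    obtain ⟨hFq, hSq⟩ := quantile_lemma μ hFc hp
    have hq' : quantileFn (rcdf (μ.map fun x : ℝ => x / 2)) (1 - α) =
        quantileFn (rcdf μ) (1 - α) / 2 := by
      rw [quantileFn]
      have hset : {x : ℝ | 1 - α ≤ rcdf (μ.map fun x : ℝ => x / 2) x} =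
          Ici (quantileFn (rcdf μ) (1 - α) / 2) := by
        ext x
        rw [mem_setOf_eq, hrc x, mem_Ici]
        constructor
        · intro hx
          have hx2 : (2 * x) ∈ {y : ℝ | 1 - α ≤ rcdf μ y} := hx
          rw [hSq, mem_Ici] at hx2
          linarith
        · intro hx
          have hx2 : (2 * x) ∈ Ici (quantileFn (rcdf μ) (1 - α)) := by
            rw [mem_Ici]; linarith
          rw [← hSq] at hx2
          exact hx2
      rw [hset, csInf_Ici]
    rw [hq', hrc,
      show 2 * (quantileFn (rcdf μ) (1 - α) / 2 - 1) = quantileFn (rcdf μ) (1 - α) - 2 from by ring]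
    exact (core α hα).2
  · intro x
    rw [hrc x, hrc (-x), show 2 * (-x) = -(2 * x) from by ring]
    exact hcnd.symm (2 * x)
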